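/- arXiv:2207.09751 — 4 statements merged into one kernel-verified Lean document; each statement's English description precedes it below -/
import Mathlib

section
/- Let G be a graph and let H be a c-size contraction of G (i.e., H is obtained from G by contracting a partition of V(G) into connected sets each of size at most c). Then tw(G) ≤ (c+1)·(tw(H)+1) − 1, where tw denotes treewidth. -/
open SimpleGraph

universe u

/-- A set `S` is a connected set of `G` if the induced subgraph is connected. -/
def ConnSet {V : Type u} (G : SimpleGraph V) (S : Set V) : Prop :=
  (G.induce S).Connected

/-- `σ` witnesses that `H` is a contraction of `G`: `σ` is surjective, every fiber
induces a connected nonempty subgraph, and `H.Adj x y` iff the union of the fibers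
of `x` and `y` induces a connected subgraph. -/
def IsContractionMap {V : Type u} {W : Type*} (G : SimpleGraph V) (H : SimpleGraph W)
    (σ : V → W) : Prop :=
  Function.Surjective σ ∧
  (∀ x : W, ConnSet G (σ ⁻¹' {x})) ∧
  (∀ x y : W, x ≠ y → (H.Adj x y ↔ ConnSet G (σ ⁻¹' {x} ∪ σ ⁻¹' {y})))

/-- `H` is a contraction of `G`. -/
def IsContraction {W : Type*} {V : Type u} (H : SimpleGraph W) (G : SimpleGraph V) : Prop :=
  ∃ σ : V → W, IsContractionMap G H σ

/-- The set `S` has diameter at most `c` in `G` (distances measured in `G[S]`). -/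
def DiamLE {V : Type u} (G : SimpleGraph V) (S : Set V) (c : ℕ) : Prop :=
  ∀ u v : S, (G.induce S).dist u v ≤ c

/-- `H` is a `c`-size contraction of `G`: all fibers have at most `c` vertices. -/
def IsSizeContraction {W : Type*} {V : Type u} (H : SimpleGraph W) (G : SimpleGraph V)
    (c : ℕ) : Prop :=
  ∃ σ : V → W, IsContractionMap G H σ ∧ ∀ x : W, (σ ⁻¹' {x}).ncard ≤ c

/-- `H` is a `c`-diameter contraction of `G`: all fibers have diameter at most `c`. -/
def IsDiamContraction {W : Type*} {V : Type u} (H : SimpleGraph W) (G : SimpleGraph V)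
    (c : ℕ) : Prop :=
  ∃ σ : V → W, IsContractionMap G H σ ∧ ∀ x : W, DiamLE G (σ ⁻¹' {x}) c

/-- `H` is a minor of `G`: `H` is a contraction of a subgraph of `G`. -/
def IsMinor {W : Type*} {V : Type u} (H : SimpleGraph W) (G : SimpleGraph V) : Prop :=
  ∃ (S : Set V) (G' : SimpleGraph S),
    (∀ a b : S, G'.Adj a b → G.Adj a.val b.val) ∧ IsContraction H G'

/-- A tree-decomposition of `G`. -/
structure TreeDecomp {V : Type u} (G : SimpleGraph V) where
  ι : Type u
  T : SimpleGraph ι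
  isTree : T.IsTree
  bag : ι → Set V
  mem_bag : ∀ v : V, ∃ t, v ∈ bag t
  edge_bag : ∀ ⦃u v : V⦄, G.Adj u v → ∃ t, u ∈ bag t ∧ v ∈ bag t
  conn_bag : ∀ v : V, ConnSet T {t | v ∈ bag t}

/-- `G` has treewidth at most `k`. -/
def TwLE {V : Type u} (G : SimpleGraph V) (k : ℕ) : Prop :=
  ∃ D : TreeDecomp G, ∀ t, (D.bag t).ncard ≤ k + 1

/-- The treewidth of `G`. -/
noncomputable def tw {V : Type u} (G : SimpleGraph V) : ℕ :=
  sInf {k | TwLE G k}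

/-- Boundary vertices of the `(k × k)`-grid. -/
def Boundary (k : ℕ) (q : Fin k × Fin k) : Prop :=
  q.1.val = 0 ∨ q.1.val = k - 1 ∨ q.2.val = 0 ∨ q.2.val = k - 1

/-- The base relation of the uniformly triangulated grid `Γ_k`: grid edges,
diagonal edges, and edges from the corner `(k-1,k-1)` to all boundary vertices. -/
def triGridRel (k : ℕ) (p q : Fin k × Fin k) : Prop :=
  (p.1 = q.1 ∧ p.2.val + 1 = q.2.val) ∨
  (p.2 = q.2 ∧ p.1.val + 1 = q.1.val) ∨
  (p.1.val = q.1.val + 1 ∧ q.2.val = p.2.val + 1) ∨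
  (p.1.val = k - 1 ∧ p.2.val = k - 1 ∧ Boundary k q)

/-- The uniformly triangulated grid `Γ_k`. -/
def triGrid (k : ℕ) : SimpleGraph (Fin k × Fin k) :=
  SimpleGraph.fromRel (triGridRel k)

/-- `bcg G` is the maximum `k` such that `Γ_k` is a contraction of `G`. -/
noncomputable def bcg {V : Type u} (G : SimpleGraph V) : ℕ :=
  sSup {k | IsContraction (triGrid k) G}

/-- The graph obtained from `G` by dissolving the degree-2 vertex `v` with
neighbors `x` and `y`. -/
def dissolve {V : Type u} (G : SimpleGraph V) (v x y : V) :
    SimpleGraph {u : V // u ≠ v} :=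
  SimpleGraph.fromRel (fun a b => G.Adj a.val b.val ∨ (a.val = x ∧ b.val = y))

/-- Bundled finite simple graphs. -/
structure BGraph : Type 1 where
  V : Type
  [fintypeV : Fintype V]
  G : SimpleGraph V

attribute [instance] BGraph.fintypeV

/-- `B` is obtained from `A` by dissolving one degree-2 vertex. -/
def DissolveStep (A B : BGraph) : Prop :=
  ∃ (v x y : A.V), x ≠ y ∧ A.G.neighborSet v = {x, y} ∧
    Nonempty (B.G ≃g dissolve A.G v x y)

/-- `B` is a dissolution of `A` (a finite sequence of dissolutions of degree-2 vertices). -/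
def IsDissolution (A B : BGraph) : Prop :=
  Relation.ReflTransGen DissolveStep A B

/-!
Pulling back the bags of a tree-decomposition of `H` along the contraction map gives a
tree-decomposition of `G` over the same tree: an edge of `G` lies inside one branch set or joins
two adjacent ones, so it is covered by the preimage of a bag covering a vertex or an edge of `H`,
and the preimage of a bag of at most `k + 1` vertices has at most `c * (k + 1)` vertices.
-/

lemma Set.ncard_preimage_le_mul_ncard {α β : Type*} {f : α → β} {c : ℕ}
    (hf : ∀ b, (f ⁻¹' {b}).ncard ≤ c) {s : Set β} (hs : s.Finite) :
    (f ⁻¹' s).ncard ≤ c * s.ncard := by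
  obtain ⟨t, rfl⟩ := hs.exists_finset_coe
  calc (f ⁻¹' ↑t).ncard = (⋃ b ∈ t, f ⁻¹' {b}).ncard := by
        congr 1; ext; simp
    _ ≤ ∑ b ∈ t, (f ⁻¹' {b}).ncard := t.set_ncard_biUnion_le _
    _ ≤ ∑ _b ∈ t, c := Finset.sum_le_sum fun b _ => hf b
    _ = c * (t : Set β).ncard := by
        rw [Finset.sum_const, smul_eq_mul, Set.ncard_coe_finset, mul_comm]

lemma IsContractionMap.eq_or_adj {V : Type u} {W : Type*} {G : SimpleGraph V}
    {H : SimpleGraph W} {σ : V → W} (hσ : IsContractionMap G H σ) {u v : V} (huv : G.Adj u v) :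
    σ u = σ v ∨ H.Adj (σ u) (σ v) := by
  refine or_iff_not_imp_left.2 fun hne => (hσ.2.2 _ _ hne).2 ?_
  exact connected_induce_union (hσ.2.1 _).preconnected (hσ.2.1 _).preconnected rfl rfl huv

def TreeDecomp.comap {V W : Type u} {G : SimpleGraph V} {H : SimpleGraph W} (D : TreeDecomp H)
    (σ : V → W) (hσ : ∀ ⦃u v : V⦄, G.Adj u v → σ u = σ v ∨ H.Adj (σ u) (σ v)) :
    TreeDecomp G where
  ι := D.ι
  T := D.T
  isTree := D.isTree
  bag t := σ ⁻¹' D.bag t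
  mem_bag v := D.mem_bag (σ v)
  edge_bag u v huv := by
    rcases hσ huv with heq | hadj
    · obtain ⟨t, ht⟩ := D.mem_bag (σ u)
      exact ⟨t, ht, show σ v ∈ D.bag t from heq ▸ ht⟩
    · exact D.edge_bag hadj
  conn_bag v := D.conn_bag (σ v)

lemma twLE_natCard {W : Type u} [Finite W] (H : SimpleGraph W) : TwLE H (Nat.card W) := by
  refine ⟨⟨PUnit, ⊥, ⟨.of_subsingleton, isAcyclic_bot⟩, fun _ => Set.univ,
    fun _ => ⟨PUnit.unit, trivial⟩, fun _ _ _ => ⟨PUnit.unit, trivial, trivial⟩,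
    fun _ => @Connected.of_subsingleton _ _ ⟨⟨PUnit.unit, trivial⟩⟩ _⟩, fun _ => ?_⟩
  rw [Set.ncard_univ]
  exact Nat.le_succ _

lemma twLE_tw {W : Type u} [Finite W] (H : SimpleGraph W) : TwLE H (tw H) :=
  Nat.sInf_mem (s := {k | TwLE H k}) ⟨_, twLE_natCard H⟩

lemma TwLE.of_isSizeContraction {V W : Type u} [Finite W] {G : SimpleGraph V}
    {H : SimpleGraph W} {c k : ℕ} (hH : TwLE H k) (h : IsSizeContraction H G c) :
    TwLE G (c * (k + 1) - 1) := by
  obtain ⟨D, hD⟩ := hH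
  obtain ⟨σ, hσ, hsize⟩ := h
  refine ⟨D.comap σ fun _ _ => hσ.eq_or_adj, fun t => ?_⟩
  calc (σ ⁻¹' D.bag t).ncard ≤ c * (D.bag t).ncard :=
        Set.ncard_preimage_le_mul_ncard hsize (Set.toFinite _)
    _ ≤ c * (k + 1) := Nat.mul_le_mul_left c (hD t)
    _ ≤ c * (k + 1) - 1 + 1 := by omega

theorem stmt_0_general {V W : Type} [Fintype W]
    (G : SimpleGraph V) (H : SimpleGraph W) (c : ℕ)
    (h : IsSizeContraction H G c) :
    tw G ≤ (c + 1) * (tw H + 1) - 1 :=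
  calc tw G ≤ c * (tw H + 1) - 1 := Nat.sInf_le ((twLE_tw H).of_isSizeContraction h)
    _ ≤ (c + 1) * (tw H + 1) - 1 := Nat.sub_le_sub_right (by gcongr; omega) 1

/-- If `H` is a `c`-size contraction of `G`, then
`tw(G) ≤ (c+1)·(tw(H)+1) − 1`. -/
theorem stmt_0 {V W : Type} [Fintype V] [Fintype W]
    (G : SimpleGraph V) (H : SimpleGraph W) (c : ℕ)
    (h : IsSizeContraction H G c) :
    tw G ≤ (c + 1) * (tw H + 1) - 1 :=
  stmt_0_general G H c h
end

section
/- Let Q be a graph in which every vertex has degree at least 3, and let G be a graph with a vertex v of degree exactly 2 with neighbors x and y. Let H be the graph obtained from G by dissolving v (deleting v and its two incident edges, and adding the edge {x,y}). If Q is a contraction of G, then Q is a contraction of H. -/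
/-! Let `σ` contract `G` onto `Q`. If neither `x` nor `y` lay in the fiber of `v`, that fiber
would be `{v}`, and every `Q`-neighbour of `σ v` would be the image of a `G`-neighbour of `v`,
so `σ v` would have degree at most `2`. Hence `v` shares its fiber with `x`, say, and then every
fiber and every union of two fibers contains both or neither of `v` and `x`. For such sets,
connectivity survives the dissolution: the edge `v y` is taken over by the new edge `x y`, and
conversely the new edge `x y` is the path `x v y` of `G`. -/

open SimpleGraph

universe u

namespace SimpleGraph

variable {α β : Type*} {A : SimpleGraph α} {B : SimpleGraph β} {f : α → β}

theorem Reachable.map_of_adj_reachable (hf : ∀ a a', A.Adj a a' → B.Reachable (f a) (f a'))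
    {a a' : α} (h : A.Reachable a a') : B.Reachable (f a) (f a') := by
  rw [reachable_iff_reflTransGen] at h ⊢
  exact Relation.ReflTransGen.lift' f (fun a a' hadj => (reachable_iff_reflTransGen _ _).1
    (hf a a' hadj)) _ _ h

theorem Connected.of_adj_reachable (hA : A.Connected)
    (hf : ∀ a a', A.Adj a a' → B.Reachable (f a) (f a'))
    (hcover : ∀ b, ∃ a, B.Reachable (f a) b) : B.Connected := by
  have : Nonempty β := ⟨f hA.nonempty.some⟩
  refine ⟨fun b b' => ?_⟩
  obtain ⟨a, hab⟩ := hcover b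
  obtain ⟨a', hab'⟩ := hcover b'
  exact hab.symm.trans ((hA.preconnected a a').map_of_adj_reachable hf |>.trans hab')

end SimpleGraph

section

variable {V : Type u} {G : SimpleGraph V}

theorem ConnSet.exists_boundary_adj {S T : Set V} (hS : ConnSet G S) {u w : V}
    (hu : u ∈ S) (huT : u ∈ T) (hw : w ∈ S) (hwT : w ∉ T) :
    ∃ a ∈ S, ∃ b ∈ S, a ∈ T ∧ b ∉ T ∧ G.Adj a b := by
  obtain ⟨p⟩ := hS.preconnected ⟨u, hu⟩ ⟨w, hw⟩
  obtain ⟨d, -, hd, hd'⟩ := p.exists_boundary_dart {z | z.1 ∈ T} huT hwT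
  exact ⟨_, d.fst.2, _, d.snd.2, hd, hd', d.adj⟩

variable {W : Type*} {Q : SimpleGraph W} {σ : V → W}

theorem IsContractionMap.exists_adj_of_adj (hσ : IsContractionMap G Q σ) {a b : W}
    (hab : Q.Adj a b) : ∃ u u', σ u = a ∧ σ u' = b ∧ G.Adj u u' := by
  obtain ⟨ua, rfl⟩ := hσ.1 a
  obtain ⟨ub, rfl⟩ := hσ.1 b
  obtain ⟨u, -, u', hu', hu, hu'a, hadj⟩ := ((hσ.2.2 _ _ hab.ne).1 hab).exists_boundary_adj
    (T := σ ⁻¹' {σ ua}) (Or.inl rfl) rfl (Or.inr rfl) hab.ne'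
  exact ⟨u, u', hu, hu'.resolve_left hu'a, hadj⟩

theorem IsContractionMap.fiber_eq_singleton (hσ : IsContractionMap G Q σ) {v : V}
    (hv : ∀ z, G.Adj v z → σ z ≠ σ v) : σ ⁻¹' {σ v} = {v} := by
  refine Set.eq_singleton_iff_unique_mem.2 ⟨rfl, fun u hu => ?_⟩
  by_contra huv
  obtain ⟨a, -, b, hb, rfl, hbv, hadj⟩ := (hσ.2.1 (σ v)).exists_boundary_adj
    (T := {v}) rfl rfl hu huv
  exact hv b hadj hb

theorem IsContractionMap.apply_eq_or_apply_eq_of_neighborSet_subset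
    (hσ : IsContractionMap G Q σ) (hQ : ∀ w : W, 3 ≤ (Q.neighborSet w).ncard)
    {v x y : V} (hN : G.neighborSet v ⊆ {x, y}) : σ x = σ v ∨ σ y = σ v := by
  by_contra! hxy
  have hfiber : σ ⁻¹' {σ v} = {v} := hσ.fiber_eq_singleton fun z hz => by
    rcases hN hz with rfl | rfl
    exacts [hxy.1, hxy.2]
  have hsub : Q.neighborSet (σ v) ⊆ {σ x, σ y} := by
    intro w hw
    obtain ⟨u, u', hu, rfl, hadj⟩ := hσ.exists_adj_of_adj hw
    obtain rfl : u = v := by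
      have hu : u ∈ σ ⁻¹' {σ v} := hu
      rwa [hfiber] at hu
    rcases hN hadj with rfl | rfl
    exacts [Or.inl rfl, Or.inr rfl]
  have hle : ({σ x, σ y} : Set W).ncard ≤ 2 :=
    (Set.ncard_insert_le _ _).trans (by rw [Set.ncard_singleton])
  have := (Set.ncard_le_ncard hsub (Set.toFinite _)).trans hle
  have := hQ (σ v)
  omega

end

section

variable {V : Type u} {G : SimpleGraph V} {v x y : V}

theorem dissolve_comm (G : SimpleGraph V) (v x y : V) :
    dissolve G v x y = dissolve G v y x := by
  ext a b
  simp only [dissolve, fromRel_adj]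
  tauto

theorem dissolve_adj {a b : {u : V // u ≠ v}} :
    (dissolve G v x y).Adj a b ↔ a ≠ b ∧
      (G.Adj a b ∨ a.1 = x ∧ b.1 = y ∨ a.1 = y ∧ b.1 = x) := by
  simp only [dissolve, fromRel_adj]
  have := G.adj_comm a b
  tauto

theorem ConnSet.dissolve_preimage_val (hxv : x ≠ v) (hN : G.neighborSet v ⊆ {x, y}) {S : Set V}
    (hS : v ∈ S → x ∈ S) (h : ConnSet G S) :
    ConnSet (dissolve G v x y) (Subtype.val ⁻¹' S) := by
  classical
  let f : S → (Subtype.val ⁻¹' S : Set {u : V // u ≠ v}) := fun u =>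
    if hu : u.1 = v then ⟨⟨x, hxv⟩, hS (hu ▸ u.2)⟩ else ⟨⟨u, hu⟩, u.2⟩
  have hf_ne (u : S) (hu : u.1 ≠ v) : f u = ⟨⟨u.1, hu⟩, u.2⟩ := dif_neg hu
  have hf_eq (u : S) (hu : u.1 = v) : f u = ⟨⟨x, hxv⟩, hS (hu ▸ u.2)⟩ := dif_pos hu
  have hreach_of_eq (u w : S) (hu : u.1 = v) (hadj : G.Adj u w) :
      (induce _ (dissolve G v x y)).Reachable (f u) (f w) := by
    have hw : w.1 ≠ v := hadj.ne'.trans_eq hu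
    rw [hf_eq u hu, hf_ne w hw]
    by_cases hwx : w.1 = x
    · rw [show (⟨⟨x, hxv⟩, _⟩ : (Subtype.val ⁻¹' S : Set {u : V // u ≠ v})) =
        ⟨⟨w, hw⟩, w.2⟩ from Subtype.ext (Subtype.ext hwx.symm)]
    · have hwy : w.1 = y := (hN (hu ▸ hadj)).resolve_left hwx
      exact Adj.reachable (induce_adj.2 (dissolve_adj.2
        ⟨fun h => hwx (congrArg Subtype.val h.symm), Or.inr (Or.inl ⟨rfl, hwy⟩)⟩))
  refine h.of_adj_reachable (f := f) (fun u w hadj => ?_) (fun b => ⟨⟨b.1, b.2⟩, ?_⟩)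
  · by_cases hu : u.1 = v
    · exact hreach_of_eq u w hu hadj
    by_cases hw : w.1 = v
    · exact (hreach_of_eq w u hw hadj.symm).symm
    rw [hf_ne u hu, hf_ne w hw]
    exact Adj.reachable (induce_adj.2 (dissolve_adj.2
      ⟨fun h => hadj.ne (Subtype.ext (Subtype.mk.inj h)), Or.inl hadj⟩))
  · rw [hf_ne _ b.1.2]

theorem ConnSet.of_dissolve_preimage_val (hvx : G.Adj v x) (hvy : G.Adj v y) {S : Set V}
    (hS : v ∈ S ↔ x ∈ S) (h : ConnSet (dissolve G v x y) (Subtype.val ⁻¹' S)) :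
    ConnSet G S := by
  have hpath (a b : S) (hv : v ∈ S) (ha : G.Adj a v) (hb : G.Adj v b) :
      (G.induce S).Reachable a b :=
    (Adj.reachable (induce_adj.2 ha : (G.induce S).Adj a ⟨v, hv⟩)).trans
      (Adj.reachable (induce_adj.2 hb))
  refine h.of_adj_reachable (f := fun a => ⟨a.1.1, a.2⟩) (fun a b hab => ?_) (fun b => ?_)
  · rcases (dissolve_adj.1 (induce_adj.1 hab)).2 with hG | ⟨hax, hby⟩ | ⟨hay, hbx⟩
    · exact Adj.reachable (induce_adj.2 hG)
    · exact hpath _ _ (hS.2 (hax ▸ a.2)) (hax ▸ hvx.symm) (hby ▸ hvy)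
    · exact hpath _ _ (hS.2 (hbx ▸ b.2)) (hay ▸ hvy.symm) (hbx ▸ hvx)
  · by_cases hb : b.1 = v
    · refine ⟨⟨⟨x, hvx.ne'⟩, hS.1 (hb ▸ b.2)⟩, Adj.reachable (induce_adj.2 ?_)⟩
      exact hb ▸ hvx.symm
    · exact ⟨⟨⟨b, hb⟩, b.2⟩, Reachable.rfl⟩

variable {W : Type*} {Q : SimpleGraph W} {σ : V → W}

theorem IsContractionMap.restrict_dissolve (hσ : IsContractionMap G Q σ)
    (hN : G.neighborSet v = {x, y}) (hx : σ x = σ v) :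
    IsContractionMap (dissolve G v x y) Q (fun u => σ u.1) := by
  have hvx : G.Adj v x := by simp [← mem_neighborSet, hN]
  have hvy : G.Adj v y := by simp [← mem_neighborSet, hN]
  have hS (T : Set W) : v ∈ σ ⁻¹' T ↔ x ∈ σ ⁻¹' T := by simp [hx]
  have hconn (T : Set W) :
      ConnSet (dissolve G v x y) ((fun u => σ u.1) ⁻¹' T) ↔ ConnSet G (σ ⁻¹' T) :=
    ⟨ConnSet.of_dissolve_preimage_val (S := σ ⁻¹' T) hvx hvy (hS T),
      ConnSet.dissolve_preimage_val hvx.ne' hN.subset (hS T).1⟩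
  refine ⟨fun w => ?_, fun w => (hconn {w}).2 (hσ.2.1 w), fun a b hab => ?_⟩
  · obtain ⟨u, rfl⟩ := hσ.1 w
    by_cases hu : u = v
    · exact ⟨⟨x, hvx.ne'⟩, hu ▸ hx⟩
    · exact ⟨⟨u, hu⟩, rfl⟩
  · rw [hσ.2.2 a b hab, ← Set.preimage_union, ← Set.preimage_union]
    exact (hconn _).symm

end

theorem stmt_3_general {VQ V : Type u} (Q : SimpleGraph VQ) (G : SimpleGraph V)
    (hQ : ∀ w : VQ, 3 ≤ (Q.neighborSet w).ncard)
    (v x y : V) (hN : G.neighborSet v = {x, y})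
    (h : IsContraction Q G) :
    IsContraction Q (dissolve G v x y) := by
  obtain ⟨σ, hσ⟩ := h
  rcases hσ.apply_eq_or_apply_eq_of_neighborSet_subset hQ hN.subset with hx | hy
  · exact ⟨_, hσ.restrict_dissolve hN hx⟩
  · rw [dissolve_comm]
    exact ⟨_, hσ.restrict_dissolve (hN.trans (Set.pair_comm x y)) hy⟩

/-- If every vertex of `Q` has degree at least 3, `v` is a vertex of `G`
of degree exactly 2 with neighbors `x ≠ y`, and `Q` is a contraction of `G`, then `Q`
is a contraction of the graph obtained from `G` by dissolving `v`. -/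
theorem stmt_3 {VQ V : Type u} (Q : SimpleGraph VQ) (G : SimpleGraph V)
    (hQ : ∀ w : VQ, 3 ≤ (Q.neighborSet w).ncard)
    (v x y : V) (hxy : x ≠ y) (hN : G.neighborSet v = {x, y})
    (h : IsContraction Q G) :
    IsContraction Q (dissolve G v x y) :=
  stmt_3_general Q G hQ v x y hN h
end

section
/- Let S be a complete Λ-state configuration of a connected graph G with respect to a c-diameter partition A such that every cloud of A is contained in some state. Then the quotient of G by the partition into states yields a graph G' containing a subgraph isomorphic to Λ, and G' is a contraction of any graph H that is obtained from G by contracting each cloud of A to a single vertex. -/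
open SimpleGraph

universe u

/-- The quotient graph of `G` by the partition into the fibers of `s`: two classes are
adjacent iff the union of the corresponding fibers induces a connected subgraph. -/
def quotGraph {V ι : Type u} (G : SimpleGraph V) (s : V → ι) : SimpleGraph ι where
  Adj i j := i ≠ j ∧ ConnSet G (s ⁻¹' {i} ∪ s ⁻¹' {j})
  symm := by
    constructor
    intro i j hij
    exact ⟨hij.1.symm, by rw [Set.union_comm]; exact hij.2⟩
  loopless := ⟨fun i hi => hi.1 rfl⟩

/-! Each freeway runs from one state to the other inside the union of its two end states, so
that union of two connected sets is connected. For the contraction, the clouds lie inside states,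
hence the state map `s` factors as `σ ∘ φ` through the map `φ` contracting the clouds. For a
contraction map `φ`, a set of vertices of `H` is connected exactly when its preimage in `G` is;
applied to the fibers of `σ` and to unions of two of them, this makes `σ` a contraction map from
`H` onto the quotient by the states. -/

namespace SimpleGraph

variable {V V' : Type*} {G : SimpleGraph V} {H : SimpleGraph V'}

theorem Preconnected.map_of_adj_or_eq (hG : G.Preconnected) (f : V → V')
    (hf : Function.Surjective f) (hadj : ∀ u v, G.Adj u v → f u = f v ∨ H.Adj (f u) (f v)) :
    H.Preconnected := by
  intro x y
  obtain ⟨u, rfl⟩ := hf x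
  obtain ⟨v, rfl⟩ := hf y
  have hstep : ∀ a b, G.Adj a b → Relation.ReflTransGen H.Adj (f a) (f b) := by
    intro a b hab
    rcases hadj a b hab with h | h
    · exact h ▸ Relation.ReflTransGen.refl
    · exact Relation.ReflTransGen.single h
  have huv := hG u v
  rw [reachable_iff_reflTransGen] at huv ⊢
  exact Relation.ReflTransGen.lift' f hstep u v huv

theorem Preconnected.of_reachable_fibers (hH : H.Preconnected) (f : V → V')
    (hfib : ∀ u v, f u = f v → G.Reachable u v)
    (hedge : ∀ x y, H.Adj x y → ∃ u v, f u = x ∧ f v = y ∧ G.Reachable u v) :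
    G.Preconnected := by
  intro u v
  suffices ∀ y, Relation.ReflTransGen H.Adj (f u) y → ∀ w, f w = y → G.Reachable u w from
    this _ ((reachable_iff_reflTransGen _ _).mp (hH (f u) (f v))) v rfl
  intro y hy
  induction hy with
  | refl => exact fun w hw => hfib u w hw.symm
  | tail _ hyz ih =>
    rintro w rfl
    obtain ⟨a, b, rfl, hb, hab⟩ := hedge _ _ hyz
    exact (ih a rfl).trans (hab.trans (hfib b w hb))

end SimpleGraph

section ConnSet

variable {V : Type*} {G : SimpleGraph V}

theorem ConnSet.reachable_induce {S T : Set V} (hS : ConnSet G S) (hST : S ⊆ T) {u v : V}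
    (hu : u ∈ S) (hv : v ∈ S) : (G.induce T).Reachable ⟨u, hST hu⟩ ⟨v, hST hv⟩ :=
  (hS.preconnected ⟨u, hu⟩ ⟨v, hv⟩).map (G.induceHomOfLE hST).toHom

theorem ConnSet.union_of_walk {S T : Set V} (hS : ConnSet G S) (hT : ConnSet G T) {a b : V}
    (p : G.Walk a b) (ha : a ∈ S) (hb : b ∈ T) (hp : ∀ w ∈ p.support, w ∈ S ∪ T) :
    ConnSet G (S ∪ T) := by
  have hSp : ConnSet G (S ∪ {w | w ∈ p.support}) :=
    induce_union_connected hS.preconnected p.connected_induce_support.preconnected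
      ⟨a, ha, p.start_mem_support⟩
  have hSpT : ConnSet G ((S ∪ {w | w ∈ p.support}) ∪ T) :=
    induce_union_connected hSp.preconnected hT.preconnected
      ⟨b, Or.inr p.end_mem_support, hb⟩
  rwa [Set.union_right_comm, Set.union_eq_left.mpr (show {w | w ∈ p.support} ⊆ S ∪ T from hp)]
    at hSpT

end ConnSet

namespace IsContractionMap

variable {V W X : Type*} {G : SimpleGraph V} {H : SimpleGraph W} {K : SimpleGraph X}
  {φ : V → W}

theorem adj_or_eq (hφ : IsContractionMap G H φ) {a b : V} (hab : G.Adj a b) :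
    φ a = φ b ∨ H.Adj (φ a) (φ b) := by
  refine or_iff_not_imp_left.mpr fun hne => (hφ.2.2 _ _ hne).mpr ?_
  exact connected_induce_union (hφ.2.1 _).preconnected (hφ.2.1 _).preconnected rfl rfl hab

theorem connSet_preimage_iff (hφ : IsContractionMap G H φ) (S : Set W) :
    ConnSet G (φ ⁻¹' S) ↔ ConnSet H S := by
  obtain ⟨hsurj, hfib, hadj⟩ := hφ
  have hsurjS := Set.restrictPreimage_surjective S hsurj
  have hne : (φ ⁻¹' S).Nonempty ↔ S.Nonempty :=
    ⟨fun ⟨u, hu⟩ => ⟨φ u, hu⟩, fun hS => hS.preimage hsurj⟩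
  unfold ConnSet
  rw [connected_iff, connected_iff, Set.nonempty_coe_sort, Set.nonempty_coe_sort, hne]
  refine and_congr_left fun _ => ⟨fun hG => hG.map_of_adj_or_eq _ hsurjS ?_,
    fun hH => hH.of_reachable_fibers (S.restrictPreimage φ) ?_ ?_⟩
  · intro u v huv
    simpa [Subtype.ext_iff] using adj_or_eq ⟨hsurj, hfib, hadj⟩ huv
  · rintro ⟨u, hu⟩ ⟨v, hv⟩ huv
    have hx : φ u = φ v := congrArg Subtype.val huv
    have hsub : φ ⁻¹' {φ u} ⊆ φ ⁻¹' S := fun w (hw : φ w = φ u) =>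
      show φ w ∈ S from hw ▸ hu
    exact (hfib (φ u)).reachable_induce hsub rfl hx.symm
  · rintro ⟨x, hx⟩ ⟨y, hy⟩ hxy
    obtain ⟨a, rfl⟩ := hsurj x
    obtain ⟨b, rfl⟩ := hsurj y
    replace hxy : H.Adj (φ a) (φ b) := hxy
    have hsub : φ ⁻¹' {φ a} ∪ φ ⁻¹' {φ b} ⊆ φ ⁻¹' S := by
      rintro w (hw | hw) <;> simp_all
    exact ⟨⟨a, hx⟩, ⟨b, hy⟩, rfl, rfl,
      ((hadj _ _ hxy.ne).mp hxy).reachable_induce hsub (Or.inl rfl) (Or.inr rfl)⟩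

theorem of_comp (hφ : IsContractionMap G H φ) {σ : W → X}
    (hσφ : IsContractionMap G K (σ ∘ φ)) : IsContractionMap H K σ := by
  obtain ⟨hsurj, hfib, hadj⟩ := hσφ
  refine ⟨hsurj.of_comp, fun x => ?_, fun x y hxy => ?_⟩
  · rw [← hφ.connSet_preimage_iff]
    exact hfib x
  · rw [hadj x y hxy, ← hφ.connSet_preimage_iff]
    rfl

end IsContractionMap

theorem isContractionMap_quotGraph {V ι : Type u} {G : SimpleGraph V} {s : V → ι}
    (hs : Function.Surjective s) (hconn : ∀ i, ConnSet G (s ⁻¹' {i})) :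
    IsContractionMap G (quotGraph G s) s :=
  ⟨hs, hconn, fun _ _ hij => and_iff_right hij⟩

theorem exists_comp_eq_of_fibers {α β γ : Type*} {φ : α → β} (hφ : Function.Surjective φ)
    {s : α → γ} (hs : ∀ u w, φ u = φ w → s u = s w) : ∃ σ : β → γ, s = σ ∘ φ :=
  ⟨s ∘ Function.surjInv hφ, funext fun u => hs _ _ (Function.surjInv_eq hφ (φ u)).symm⟩

theorem stmt_17_general {V ι : Type u} (G : SimpleGraph V)
    (Λ : SimpleGraph ι) (Wt : ι → Set V)
    -- the states are the fibers of `s` (the configuration is complete)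
    (s : V → ι) (hs : Function.Surjective s)
    (hXconn : ∀ i, ConnSet G (s ⁻¹' {i}))
    (hWX : ∀ i, Wt i ⊆ s ⁻¹' {i})
    -- the freeways
    (ep₁ ep₂ : ∀ {i j : ι}, Λ.Adj i j → V)
    (P : ∀ {i j : ι} (h : Λ.Adj i j), G.Walk (ep₁ h) (ep₂ h))
    (hep₁ : ∀ {i j : ι} (h : Λ.Adj i j), ep₁ h ∈ Wt i)
    (hep₂ : ∀ {i j : ι} (h : Λ.Adj i j), ep₂ h ∈ Wt j)
    (hPsub : ∀ {i j : ι} (h : Λ.Adj i j),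
      ∀ w ∈ (P h).support, w ∈ s ⁻¹' {i} ∪ s ⁻¹' {j})
    -- the `c`-diameter partition `A` into clouds, each inside a state
    (A : Set (Set V))
    (hCloudState : ∀ C ∈ A, ∃ i, C ⊆ s ⁻¹' {i}) :
    (∀ i j, Λ.Adj i j → (quotGraph G s).Adj i j) ∧
    (∀ (VH : Type u) (H : SimpleGraph VH) (φ : V → VH),
      IsContractionMap G H φ →
      (∀ u w : V, φ u = φ w ↔ ∃ C ∈ A, u ∈ C ∧ w ∈ C) →
      IsContraction (quotGraph G s) H) := by
  refine ⟨fun i j h => ?_, fun VH H φ hφ hclouds => ?_⟩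
  · exact ⟨h.ne, (hXconn i).union_of_walk (hXconn j) (P h)
      (hWX i (hep₁ h)) (hWX j (hep₂ h)) (hPsub h)⟩
  have hsφ : ∀ u w, φ u = φ w → s u = s w := by
    intro u w huw
    obtain ⟨C, hC, hu, hw⟩ := (hclouds u w).mp huw
    obtain ⟨i, hCi⟩ := hCloudState C hC
    exact (hCi hu).trans (hCi hw).symm
  obtain ⟨σ, rfl⟩ := exists_comp_eq_of_fibers hφ.1 hsφ
  exact ⟨σ, hφ.of_comp (isContractionMap_quotGraph hs hXconn)⟩

/-- Let `S` be a complete `Λ`-state configuration of a connected graph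
`G` with respect to a `c`-diameter partition `A` all of whose clouds are contained in
states.  The states are the fibers of `s : V → ι`, the capitals are `Wt i ⊆ s⁻¹(i)`,
and the freeways are internally disjoint paths `P h` (one for each edge `h` of `Λ`)
joining the capitals of their endpoints inside the union of the two states.  Then the
quotient `G'` of `G` by the states contains `Λ` as a subgraph, and `G'` is a
contraction of any graph `H` obtained from `G` by contracting each cloud of `A` to a
single vertex. -/
theorem stmt_17 {V ι : Type u} (G : SimpleGraph V) (hG : G.Connected)
    (Λ : SimpleGraph ι) (Wt : ι → Set V)
    (hWconn : ∀ i, ConnSet G (Wt i))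
    (hWdisj : ∀ i j, i ≠ j → Disjoint (Wt i) (Wt j))
    -- the states are the fibers of `s` (the configuration is complete)
    (s : V → ι) (hs : Function.Surjective s)
    (hXconn : ∀ i, ConnSet G (s ⁻¹' {i}))
    (hWX : ∀ i, Wt i ⊆ s ⁻¹' {i})
    -- the freeways
    (ep₁ ep₂ : ∀ {i j : ι}, Λ.Adj i j → V)
    (P : ∀ {i j : ι} (h : Λ.Adj i j), G.Walk (ep₁ h) (ep₂ h))
    (hPpath : ∀ {i j : ι} (h : Λ.Adj i j), (P h).IsPath)
    (hep₁ : ∀ {i j : ι} (h : Λ.Adj i j), ep₁ h ∈ Wt i)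
    (hep₂ : ∀ {i j : ι} (h : Λ.Adj i j), ep₂ h ∈ Wt j)
    (hPsub : ∀ {i j : ι} (h : Λ.Adj i j),
      ∀ w ∈ (P h).support, w ∈ s ⁻¹' {i} ∪ s ⁻¹' {j})
    (hPdisj : ∀ {i j i' j' : ι} (h : Λ.Adj i j) (h' : Λ.Adj i' j'),
      ¬ (i = i' ∧ j = j') →
      ∀ w ∈ (P h).support, w ≠ ep₁ h → w ≠ ep₂ h → w ∉ (P h').support)
    -- the `c`-diameter partition `A` into clouds, each inside a state
    (A : Set (Set V)) (hApart : ∀ v : V, ∃! C, C ∈ A ∧ v ∈ C)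
    (hAconn : ∀ C ∈ A, ConnSet G C)
    (c : ℕ) (hAdiam : ∀ C ∈ A, DiamLE G C c)
    (hCloudState : ∀ C ∈ A, ∃ i, C ⊆ s ⁻¹' {i}) :
    (∀ i j, Λ.Adj i j → (quotGraph G s).Adj i j) ∧
    (∀ (VH : Type u) (H : SimpleGraph VH) (φ : V → VH),
      IsContractionMap G H φ →
      (∀ u w : V, φ u = φ w ↔ ∃ C ∈ A, u ∈ C ∧ w ∈ C) →
      IsContraction (quotGraph G s) H) :=
  stmt_17_general G Λ Wt s hs hXconn hWX ep₁ ep₂ P hep₁ hep₂ hPsub A hCloudState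
end

section
/- Let k' ≥ 3 and let Γ̂_{k'} be the extended uniformly triangulated grid. Contracting in Γ̂_{k'} the edge joining the apex vertex a to the corner vertex (k'−1, k'−1) yields a graph isomorphic to the uniformly triangulated grid Γ_{k'}. In particular, Γ_{k'} is a contraction of Γ̂_{k'}. -/
open SimpleGraph

universe u

/-- The base relation of the extended uniformly triangulated grid `Γ̂_k`: grid and
diagonal edges, and edges from the apex `none` to all boundary vertices. -/
def triGridExtRel (k : ℕ) : Option (Fin k × Fin k) → Option (Fin k × Fin k) → Prop
  | some p, some q =>
      (p.1 = q.1 ∧ p.2.val + 1 = q.2.val) ∨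
      (p.2 = q.2 ∧ p.1.val + 1 = q.1.val) ∨
      (p.1.val = q.1.val + 1 ∧ q.2.val = p.2.val + 1)
  | none, some q => Boundary k q
  | _, _ => False

/-- The extended uniformly triangulated grid `Γ̂_k`, with apex vertex `none`. -/
def triGridExt (k : ℕ) : SimpleGraph (Option (Fin k × Fin k)) :=
  SimpleGraph.fromRel (triGridExtRel k)


/-! Contracting the edge between the apex and the corner merges them into one vertex and leaves
every other fiber a singleton. As all fibers are connected, two of them form a connected set iff
an edge joins them, so the contracted graph is the quotient graph. In `Γ̂_k` the grid and diagonal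
edges survive unchanged, and the apex edges become the edges from the corner to the boundary:
exactly the edges of `Γ_k`. -/

open Function

variable {V : Type u} {W : Type*} {G : SimpleGraph V}

lemma connSet_singleton (v : V) : ConnSet G {v} := by
  rw [ConnSet, induce_singleton_eq_top]
  exact connected_top

lemma connSet_pair {u v : V} (h : G.Adj u v) : ConnSet G {u, v} :=
  induce_pair_connected_of_adj h

lemma connSet_union_iff_exists_adj {s t : Set V} (hs : ConnSet G s) (ht : ConnSet G t)
    (hst : Disjoint s t) : ConnSet G (s ∪ t) ↔ ∃ u ∈ s, ∃ v ∈ t, G.Adj u v := by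
  constructor
  · intro h
    obtain ⟨u, hu⟩ := hs.nonempty
    obtain ⟨v, hv⟩ := ht.nonempty
    obtain ⟨p⟩ := h.preconnected ⟨u, Or.inl hu⟩ ⟨v, Or.inr hv⟩
    obtain ⟨d, -, hd₁, hd₂⟩ :=
      p.exists_boundary_dart {w | w.val ∈ s} hu (Set.disjoint_right.mp hst hv)
    exact ⟨_, hd₁, _, d.snd.2.resolve_left hd₂, d.adj⟩
  · rintro ⟨u, hu, v, hv, huv⟩
    exact connected_induce_union hs.preconnected ht.preconnected hu hv huv

lemma isContractionMap_of_adj_iff {H : SimpleGraph W} {σ : V → W} (hσ : Surjective σ)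
    (hfiber : ∀ x, ConnSet G (σ ⁻¹' {x}))
    (hadj : ∀ x y, x ≠ y → (H.Adj x y ↔ ∃ u v, σ u = x ∧ σ v = y ∧ G.Adj u v)) :
    IsContractionMap G H σ := by
  refine ⟨hσ, hfiber, fun x y hxy => ?_⟩
  rw [hadj x y hxy, connSet_union_iff_exists_adj (hfiber x) (hfiber y)
    ((Set.disjoint_singleton.mpr hxy).preimage σ)]
  simp

lemma connSet_preimage_getD {G : SimpleGraph (Option V)} {c : V} (h : G.Adj none (some c))
    (x : V) : ConnSet G ((fun o : Option V => o.getD c) ⁻¹' {x}) := by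
  by_cases hx : x = c
  · subst hx
    convert connSet_pair h using 1
    ext (_ | _) <;> simp [eq_comm]
  · convert connSet_singleton (G := G) (some x) using 1
    ext (_ | _) <;> simp [Ne.symm hx]

lemma exists_adj_getD_iff {G : SimpleGraph (Option V)} {c x y : V} :
    (∃ u v : Option V, u.getD c = x ∧ v.getD c = y ∧ G.Adj u v) ↔
      G.Adj (some x) (some y) ∨ (x = c ∧ G.Adj none (some y)) ∨
        (y = c ∧ G.Adj (some x) none) := by
  simp only [Option.exists, Option.getD_none, Option.getD_some, G.irrefl, and_false]
  aesop

section TriGrid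

variable {k : ℕ} {c : Fin k × Fin k}

lemma triGridRel_iff (hc : c.1.val = k - 1 ∧ c.2.val = k - 1) {p q : Fin k × Fin k} :
    triGridRel k p q ↔ triGridExtRel k (some p) (some q) ∨ (p = c ∧ Boundary k q) := by
  have hpc : p = c ↔ p.1.val = k - 1 ∧ p.2.val = k - 1 := by
    simp [Prod.ext_iff, Fin.ext_iff, hc]
  simp only [triGridRel, triGridExtRel, hpc, and_assoc, or_assoc]

lemma triGridExt_adj_some_some {p q : Fin k × Fin k} :
    (triGridExt k).Adj (some p) (some q) ↔
      p ≠ q ∧ (triGridExtRel k (some p) (some q) ∨ triGridExtRel k (some q) (some p)) := by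
  simp [triGridExt]

lemma triGridExt_adj_none_some {q : Fin k × Fin k} :
    (triGridExt k).Adj none (some q) ↔ Boundary k q := by
  simp [triGridExt, triGridExtRel]

lemma triGrid_adj_iff_exists_triGridExt_adj (hc : c.1.val = k - 1 ∧ c.2.val = k - 1)
    {x y : Fin k × Fin k} (hxy : x ≠ y) :
    (triGrid k).Adj x y ↔
      ∃ u v : Option (Fin k × Fin k), u.getD c = x ∧ v.getD c = y ∧ (triGridExt k).Adj u v := by
  rw [exists_adj_getD_iff, triGridExt_adj_some_some, triGridExt_adj_none_some,
    (triGridExt k).adj_comm (some x), triGridExt_adj_none_some, triGrid, fromRel_adj,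
    triGridRel_iff hc, triGridRel_iff hc]
  tauto

end TriGrid

/-- For `k ≥ 3`, contracting in `Γ̂_k` the edge joining the apex to the
corner `(k−1,k−1)` (i.e., the map fixing the grid and sending the apex to the corner)
yields a graph isomorphic to `Γ_k`; in particular `Γ_k` is a contraction of `Γ̂_k`. -/
theorem stmt_18 (k : ℕ) (hk : 3 ≤ k) :
    IsContractionMap (triGridExt k) (triGrid k)
      (fun o => o.getD (⟨k - 1, by omega⟩, ⟨k - 1, by omega⟩)) ∧
    IsContraction (triGrid k) (triGridExt k) := by
  set c : Fin k × Fin k := (⟨k - 1, by omega⟩, ⟨k - 1, by omega⟩)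
  have hc : c.1.val = k - 1 ∧ c.2.val = k - 1 := ⟨rfl, rfl⟩
  have hmap : IsContractionMap (triGridExt k) (triGrid k) (fun o => o.getD c) :=
    isContractionMap_of_adj_iff (fun x => ⟨some x, rfl⟩)
      (connSet_preimage_getD (triGridExt_adj_none_some.mpr (by simp [Boundary, c])))
      (fun _ _ hxy => triGrid_adj_iff_exists_triGridExt_adj hc hxy)
  exact ⟨hmap, _, hmap⟩
end
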